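/- arXiv:2001.04961 — 7 statements merged into one kernel-verified Lean document; each statement's English description precedes it below -/
import Mathlib

section
/- Let V be a vector time, t a thread, and R : Thr → (Thr → ℕ) a family of vector times indexed by threads. Suppose V(u) = 0 for all u ≠ t. Then there exists u ≠ t with V ⊑ R(u) if and only if V ⊑ ⨆_{u ∈ Thr} (R(u))[0/u], where (R(u))[0/u] denotes R(u) with its u-th component replaced by 0 and ⨆ denotes the pointwise join (maximum) over all threads u. -/
/-!
Both sides only constrain the `t`-th coordinate, since `V` vanishes elsewhere. At `t`, the
`u`-th clock contributes `R u t` to the join when `u ≠ t` and nothing when `u = t`, so a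
positive `V t` lies below the join exactly when it lies below some `R u t` with `u ≠ t`; a zero
`V t` lies below anything, and a thread `u ≠ t` exists because there are at least two threads.
-/

open Finset Function

section

variable {ι α : Type*}

theorem Pi.le_iff_apply_le_of_eq_bot_of_ne [Preorder α] [OrderBot α] {V W : ι → α} {t : ι}
    (hV : ∀ u, u ≠ t → V u = ⊥) : V ≤ W ↔ V t ≤ W t := by
  refine ⟨fun h => h t, fun h v => ?_⟩
  by_cases hv : v = t
  · exact hv ▸ h
  · exact (hV v hv).symm ▸ bot_le

theorem le_update_bot_iff [LinearOrder α] [OrderBot α] [DecidableEq ι] {x : α} (hx : ⊥ < x)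
    (f : ι → α) (u t : ι) : x ≤ update f u ⊥ t ↔ u ≠ t ∧ x ≤ f t := by
  rcases eq_or_ne u t with rfl | hut
  · simpa using hx.ne'
  · simp [update_of_ne hut.symm, hut]

theorem exists_ne_le_iff_le_sup_update_bot [LinearOrder α] [OrderBot α] [Fintype ι]
    [DecidableEq ι] [Nontrivial ι] (R : ι → ι → α) (t : ι) (x : α) :
    (∃ u, u ≠ t ∧ x ≤ R u t) ↔ x ≤ univ.sup (fun u => update (R u) u ⊥ t) := by
  rcases eq_bot_or_bot_lt x with rfl | hx
  · simpa using exists_ne t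
  · simp [Finset.le_sup_iff hx, le_update_bot_iff hx]

end

/-- Read-clock optimization: for `V` concentrated on coordinate `t`,
`∃ u ≠ t, V ⊑ R u` iff `V ⊑ ⨆_{u} (R u)[0/u]`, where the join is pointwise
over all threads and `(R u)[0/u]` zeroes out the `u`-th component. -/
theorem readClock_optimization {Thr : Type*} [Fintype Thr] [DecidableEq Thr]
    (hcard : 1 < Fintype.card Thr)
    (V : Thr → ℕ) (t : Thr) (R : Thr → Thr → ℕ)
    (hV : ∀ u, u ≠ t → V u = 0) :
    (∃ u, u ≠ t ∧ ∀ v, V v ≤ R u v) ↔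
      (∀ v, V v ≤ Finset.univ.sup (fun u => Function.update (R u) u 0 v)) := by
  have : Nontrivial Thr := Fintype.one_lt_card_iff_nontrivial.mp hcard
  calc (∃ u, u ≠ t ∧ ∀ v, V v ≤ R u v) ↔ ∃ u, u ≠ t ∧ V t ≤ R u t := by
        simp only [← Pi.le_def, Pi.le_iff_apply_le_of_eq_bot_of_ne hV]
    -- `⊥` and `0` agree definitionally in `ℕ`
    _ ↔ V t ≤ univ.sup fun u => update (R u) u 0 t :=
        exists_ne_le_iff_le_sup_update_bot R t (V t)
    _ ↔ _ := (Pi.le_iff_apply_le_of_eq_bot_of_ne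
        (W := fun v => univ.sup fun u => update (R u) u 0 v) hV).symm
end

section
/- A trace σ is not conflict serializable (i.e., there exists a sequence of k > 1 distinct transactions T0, ..., T_{k-1} with T_i ≤THB T_{(i+1) mod k} for all i) if and only if there exist events e, f in σ such that e ⇒path f and f ≤CHB e, where ⇒path is the path-through-transactions relation. -/
/-- Conflict-happens-before: reflexive-transitive closure of conflict edges
oriented by trace order (events are `Fin n`, ordered by trace position). -/
def chb {n : ℕ} (C : Fin n → Fin n → Prop) : Fin n → Fin n → Prop :=
  Relation.ReflTransGen (fun e f => e < f ∧ C e f)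

/-- Transaction happens-before. -/
def thb {n : ℕ} {Tx : Type*} (C : Fin n → Fin n → Prop) (txn : Fin n → Tx)
    (T T' : Tx) : Prop :=
  ∃ e f, txn e = T ∧ txn f = T' ∧ chb C e f

/-- Path through transactions: `e ⇒path f`. -/
def pathTxn {n : ℕ} {Tx : Type*} (C : Fin n → Fin n → Prop) (txn : Fin n → Tx)
    (e f : Fin n) : Prop :=
  ∃ k, 1 < k ∧ ∃ es fs : ℕ → Fin n,
    es 0 = e ∧ fs (k - 1) = f ∧
    (∀ i < k, txn (es i) = txn (fs i)) ∧
    (∀ i, i + 1 < k → txn (fs i) ≠ txn (es (i + 1)) ∧ chb C (fs i) (es (i + 1)))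

/-- A cyclic sequence of `k > 1` distinct transactions under `thb`
(conflict-serializability violation). -/
def hasCycle {n : ℕ} {Tx : Type*} (C : Fin n → Fin n → Prop) (txn : Fin n → Tx) : Prop :=
  ∃ k, 1 < k ∧ ∃ Ts : ℕ → Tx,
    (∀ i < k, ∀ j < k, Ts i = Ts j → i = j) ∧
    (∀ i < k, thb C txn (Ts i) (Ts ((i + 1) % k)))

/-- The new-edge relation `e ⤳ f`. -/
def newEdge {n : ℕ} {Tx : Type*} (C : Fin n → Fin n → Prop) (txn : Fin n → Tx)
    (completed : Tx → Prop) (e f : Fin n) : Prop :=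
  ∃ g, chb C e g ∧ (g = f ∨ (pathTxn C txn g f ∧ completed (txn g)))

/-!
A cycle `T₀ → ⋯ → T_{k-1} → T₀` of `≤THB` is witnessed by events `aᵢ ∈ Tᵢ` and `bᵢ ∈ Tᵢ₊₁` with
`aᵢ ≤CHB bᵢ`. Entering `Tᵢ` at `bᵢ₋₁` and leaving it at `aᵢ` gives `b_{k-1} ⇒path a_{k-1}`, and the
cycle closes with `a_{k-1} ≤CHB b_{k-1}`.

Conversely, the transactions visited by `e ⇒path f` together with `f ≤CHB e` form a closed walk of
`≤THB` whose consecutive transactions differ (the closing step is dropped when it stays inside one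
transaction). Cutting a closed walk at a repeated transaction leaves a shorter closed walk, so some
closed walk visits distinct transactions, and it has length `> 1` because its steps are not loops.
-/

section ClosedWalk

variable {α : Type*} {R S : α → α → Prop} {k : ℕ} {w : ℕ → α}

def IsClosedWalk (R : α → α → Prop) (k : ℕ) (w : ℕ → α) : Prop :=
  w k = w 0 ∧ ∀ i < k, R (w i) (w (i + 1))

theorem IsClosedWalk.mono (h : ∀ a b, R a b → S a b) (hw : IsClosedWalk R k w) :
    IsClosedWalk S k w :=
  ⟨hw.1, fun i hi => h _ _ (hw.2 i hi)⟩

theorem IsClosedWalk.apply_succ_mod (hw : IsClosedWalk R k w) {i : ℕ} (hi : i < k) :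
    w ((i + 1) % k) = w (i + 1) := by
  rcases (show i + 1 ≤ k from hi).lt_or_eq with h | h
  · rw [Nat.mod_eq_of_lt h]
  · rw [h, Nat.mod_self, hw.1]

theorem IsClosedWalk.one_lt (hR : ∀ a, ¬ R a a) (hk : 0 < k) (hw : IsClosedWalk R k w) :
    1 < k := by
  by_contra! hk1
  obtain rfl : k = 1 := by omega
  exact hR (w 0) (hw.1 ▸ hw.2 0 hk)

theorem IsClosedWalk.exists_injOn (hk : 0 < k) (hw : IsClosedWalk R k w) :
    ∃ k', 0 < k' ∧ ∃ w' : ℕ → α, Set.InjOn w' (Set.Iio k') ∧ IsClosedWalk R k' w' := by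
  induction k using Nat.strong_induction_on generalizing w with
  | _ k ih =>
  by_cases hinj : Set.InjOn w (Set.Iio k)
  · exact ⟨k, hk, w, hinj, hw⟩
  obtain ⟨i, j, hij, hj, heq⟩ : ∃ i j, i < j ∧ j < k ∧ w i = w j := by
    simp only [Set.InjOn, Set.mem_Iio, not_forall] at hinj
    obtain ⟨a, ha, b, hb, hab, hne⟩ := hinj
    rcases Nat.lt_or_gt_of_ne hne with h | h
    exacts [⟨a, b, h, hb, hab⟩, ⟨b, a, h, ha, hab.symm⟩]
  have hcut : IsClosedWalk R (j - i) (fun m => w (i + m)) :=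
    ⟨by simp only [Nat.add_sub_cancel' hij.le, Nat.add_zero, heq],
      fun m hm => hw.2 (i + m) (by omega)⟩
  exact ih (j - i) (by omega) (by omega) hcut

theorem exists_cyclic_iff_exists_isClosedWalk :
    (∃ k, 1 < k ∧ ∃ Ts : ℕ → α,
        Set.InjOn Ts (Set.Iio k) ∧ ∀ i < k, R (Ts i) (Ts ((i + 1) % k))) ↔
      ∃ k, 1 < k ∧ ∃ w : ℕ → α, Set.InjOn w (Set.Iio k) ∧ IsClosedWalk R k w := by
  constructor
  · rintro ⟨k, hk, Ts, hinj, hR⟩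
    have hmod : ∀ i < k, Ts (i % k) = Ts i := fun i hi => by rw [Nat.mod_eq_of_lt hi]
    refine ⟨k, hk, fun i => Ts (i % k), fun i hi j hj h => ?_, ?_, fun i hi => ?_⟩
    · exact hinj hi hj (by simpa only [hmod i hi, hmod j hj] using h)
    · simp only [Nat.mod_self, Nat.zero_mod]
    · simpa only [hmod i hi] using hR i hi
  · rintro ⟨k, hk, w, hinj, hw⟩
    exact ⟨k, hk, w, hinj, fun i hi => hw.apply_succ_mod hi ▸ hw.2 i hi⟩

end ClosedWalk

section Serializability

variable {n : ℕ} {Tx : Type*} {C : Fin n → Fin n → Prop} {txn : Fin n → Tx}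

theorem exists_pathTxn_chb_of_isClosedWalk {k : ℕ} {w : ℕ → Tx} (hk : 1 < k)
    (hinj : Set.InjOn w (Set.Iio k)) (hw : IsClosedWalk (thb C txn) k w) :
    ∃ e f, pathTxn C txn e f ∧ chb C f e := by
  have : Nonempty (Fin n) := by
    obtain ⟨a, -⟩ := hw.2 0 (by omega)
    exact ⟨a⟩
  choose! a b ha hb hab using hw.2
  let es : ℕ → Fin n := fun i => if i = 0 then b (k - 1) else b (i - 1)
  refine ⟨es 0, a (k - 1), ⟨k, hk, es, a, rfl, rfl, fun i hi => ?_, fun i hi => ?_⟩,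
    hab _ (by omega)⟩
  · rcases i with _ | i
    · simp only [es, if_pos, hb (k - 1) (by omega), Nat.sub_add_cancel hk.le, hw.1,
        ha 0 hi]
    · simp only [es, if_neg (Nat.succ_ne_zero i), Nat.add_sub_cancel, hb i (by omega),
        ha (i + 1) hi]
  · simp only [es, if_neg (Nat.succ_ne_zero i), Nat.add_sub_cancel, ha i (by omega),
      hb i (by omega)]
    exact ⟨fun h => i.succ_ne_self (hinj (Set.mem_Iio.2 (by omega)) hi h).symm,
      hab i (by omega)⟩

theorem exists_isClosedWalk_of_pathTxn_chb {e f : Fin n} (hpath : pathTxn C txn e f)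
    (hfe : chb C f e) :
    ∃ k, 0 < k ∧ ∃ w, IsClosedWalk (fun T T' => T ≠ T' ∧ thb C txn T T') k w := by
  obtain ⟨k, hk, es, fs, rfl, rfl, hsame, hstep⟩ := hpath
  have hchain : ∀ i, i + 1 < k →
      txn (es i) ≠ txn (es (i + 1)) ∧ thb C txn (txn (es i)) (txn (es (i + 1))) :=
    fun i hi => hsame i (by omega) ▸ ⟨(hstep i hi).1, fs i, es (i + 1), rfl, rfl, (hstep i hi).2⟩
  let w : ℕ → Tx := fun i => txn (es (i % k))
  have hw : ∀ i < k, w i = txn (es i) := fun i hi => by simp only [w, Nat.mod_eq_of_lt hi]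
  by_cases hlast : txn (es (k - 1)) = txn (es 0)
  · refine ⟨k - 1, by omega, w, ?_, fun i hi => ?_⟩
    · rw [hw _ (by omega), hw 0 (by omega), hlast]
    · rw [hw i (by omega), hw (i + 1) (by omega)]
      exact hchain i (by omega)
  · refine ⟨k, by omega, w, by simp only [w, Nat.mod_self, Nat.zero_mod], fun i hi => ?_⟩
    rcases (show i + 1 ≤ k from hi).lt_or_eq with h | h
    · rw [hw i hi, hw (i + 1) h]
      exact hchain i h
    · obtain rfl : i = k - 1 := by omega
      simp only [w, h, Nat.mod_self, Nat.mod_eq_of_lt hi]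
      exact ⟨hlast, fs (k - 1), es 0, (hsame _ hi).symm, rfl, hfe⟩

end Serializability

theorem not_serializable_iff_path_chb_general {n : ℕ} {Tx : Type*}
    (C : Fin n → Fin n → Prop) (txn : Fin n → Tx) :
    hasCycle C txn ↔ ∃ e f : Fin n, pathTxn C txn e f ∧ chb C f e := by
  refine exists_cyclic_iff_exists_isClosedWalk.trans ⟨?_, ?_⟩
  · rintro ⟨k, hk, w, hinj, hw⟩
    exact exists_pathTxn_chb_of_isClosedWalk hk hinj hw
  · rintro ⟨e, f, hpath, hfe⟩
    obtain ⟨k, hk, w, hw⟩ := exists_isClosedWalk_of_pathTxn_chb hpath hfe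
    obtain ⟨k', hk', w', hinj, hw'⟩ := hw.exists_injOn hk
    exact ⟨k', hw'.one_lt (fun _ h => h.1 rfl) hk', w', hinj, hw'.mono fun _ _ h => h.2⟩

/-- A trace is not conflict serializable iff there are events `e, f` with
`e ⇒path f` and `f ≤CHB e`. -/
theorem not_serializable_iff_path_chb {n : ℕ} {Tx : Type*}
    (C : Fin n → Fin n → Prop) (hC : Symmetric C) (txn : Fin n → Tx) :
    hasCycle C txn ↔ ∃ e f : Fin n, pathTxn C txn e f ∧ chb C f e :=
  not_serializable_iff_path_chb_general C txn
end

section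
/- Suppose a trace σ contains a transaction T and events e, f with f ∈ T, e ∉ T, such that T▷ ⤳ e and e ⤳ f, where T▷ is the begin event of T and ⤳ is the relation of Definition new-edge. Then σ is not conflict serializable. -/
/-!
Each `⤳`-step is a chain of conflict edges, possibly continued through a path across
transactions, so it yields a `≤THB`-chain from the transaction of its source to that of its
target. Hence `T →⁺ txn e →⁺ T` with `txn e ≠ T`; shortening a walk from the head of a
non-loop edge of this closed walk back to its tail gives a cycle of distinct transactions.
-/

open Relation

section Walks

variable {α : Type*} {R : α → α → Prop}

def IsWalk (R : α → α → Prop) (w : ℕ → α) (m : ℕ) : Prop :=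
  ∀ i < m, R (w i) (w (i + 1))

lemma exists_walk_of_reflTransGen {a b : α} (h : ReflTransGen R a b) :
    ∃ m w, w 0 = a ∧ w m = b ∧ IsWalk R w m := by
  induction h using ReflTransGen.head_induction_on with
  | refl => exact ⟨0, fun _ => b, rfl, rfl, fun _ h => absurd h (Nat.not_lt_zero _)⟩
  | @head a c hac _ ih =>
    obtain ⟨m, w, hw0, hwm, hw⟩ := ih
    refine ⟨m + 1, fun | 0 => a | i + 1 => w i, rfl, hwm, ?_⟩
    rintro (_ | i) hi
    · show R a (w 0)
      exact hw0 ▸ hac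
    · exact hw i (by omega)

lemma IsWalk.shortcut {w : ℕ → α} {m p d : ℕ} (hw : IsWalk R w m) (hpd : p + d ≤ m)
    (hloop : w p = w (p + d)) :
    IsWalk R (fun i => if i ≤ p then w i else w (i + d)) (m - d) := by
  intro i hi
  by_cases hip : i < p
  · simp only [if_pos hip.le, if_pos (show i + 1 ≤ p by omega)]
    exact hw i (by omega)
  by_cases hip' : i = p
  · subst hip'
    simp only [le_refl, if_true, if_neg (show ¬ i + 1 ≤ i by omega), hloop]
    rw [show i + 1 + d = i + d + 1 by omega]
    exact hw _ (by omega)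
  · simp only [if_neg (show ¬ i ≤ p by omega), if_neg (show ¬ i + 1 ≤ p by omega)]
    rw [show i + 1 + d = i + d + 1 by omega]
    exact hw _ (by omega)

lemma IsWalk.exists_injective {w : ℕ → α} {m : ℕ} (hw : IsWalk R w m) :
    ∃ m' w', w' 0 = w 0 ∧ w' m' = w m ∧ IsWalk R w' m' ∧
      ∀ i ≤ m', ∀ j ≤ m', w' i = w' j → i = j := by
  induction m using Nat.strong_induction_on generalizing w with
  | _ m ih =>
    by_cases hrep : ∃ p q, p < q ∧ q ≤ m ∧ w p = w q
    · obtain ⟨p, q, hpq, hqm, hloop⟩ := hrep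
      have hloop' : w p = w (p + (q - p)) := by rwa [Nat.add_sub_cancel' hpq.le]
      obtain ⟨m', w', h0, hm, hw', hinj⟩ :=
        ih (m - (q - p)) (by omega) (hw.shortcut (by omega) hloop')
      refine ⟨m', w', by simpa using h0, ?_, hw', hinj⟩
      rw [hm]
      split_ifs with h
      · rw [show m - (q - p) = p by omega, hloop, show q = m by omega]
      · rw [show m - (q - p) + (q - p) = m by omega]
    · push Not at hrep
      refine ⟨m, w, rfl, rfl, hw, fun i hi j hj hij => ?_⟩
      rcases lt_trichotomy i j with h | h | h
      · exact absurd hij (hrep i j h hj)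
      · exact h
      · exact absurd hij.symm (hrep j i h hi)

lemma exists_ne_rel_of_transGen {a b : α} (h : TransGen R a b) (hab : a ≠ b) :
    ∃ x y, x ≠ y ∧ R x y ∧ ReflTransGen R a x ∧ ReflTransGen R y b := by
  induction h with
  | single hab' => exact ⟨a, _, hab, hab', .refl, .refl⟩
  | @tail c d hac hcd ih =>
    by_cases hcd' : c = d
    · subst hcd'
      exact ih hab
    · exact ⟨c, d, hcd', hcd, hac.to_reflTransGen, .refl⟩

/-- The cycle closes with the edge `R x y` around an injective walk from `y` to `x`. -/
lemma exists_cycle_of_transGen {a b : α} (hab : a ≠ b) (h₁ : TransGen R a b)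
    (h₂ : TransGen R b a) :
    ∃ k, 1 < k ∧ ∃ Ts : ℕ → α,
      (∀ i < k, ∀ j < k, Ts i = Ts j → i = j) ∧
      (∀ i < k, R (Ts i) (Ts ((i + 1) % k))) := by
  obtain ⟨x, y, hxy, hR, hax, hyb⟩ := exists_ne_rel_of_transGen h₁ hab
  have hyx : ReflTransGen R y x := hyb.trans ((h₂.to_reflTransGen).trans hax)
  obtain ⟨m₀, w₀, hw₀0, hw₀m, hw₀⟩ := exists_walk_of_reflTransGen hyx
  obtain ⟨m, w, hw0, hwm, hw, hinj⟩ := hw₀.exists_injective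
  rw [hw₀0] at hw0
  rw [hw₀m] at hwm
  have hm : m ≠ 0 := by rintro rfl; exact hxy (hwm.symm.trans hw0)
  refine ⟨m + 1, by omega, w, fun i hi j hj => hinj i (by omega) j (by omega), fun i hi => ?_⟩
  rcases Nat.lt_succ_iff_lt_or_eq.mp hi with hi | rfl
  · rw [Nat.mod_eq_of_lt (by omega)]
    exact hw i hi
  · rw [Nat.mod_self, hwm, hw0]
    exact hR

end Walks

section Transactions

variable {n : ℕ} {Tx : Type*} {C : Fin n → Fin n → Prop} {txn : Fin n → Tx}

lemma thb_of_chb {e f : Fin n} (h : chb C e f) : thb C txn (txn e) (txn f) :=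
  ⟨e, f, rfl, rfl, h⟩

lemma pathTxn.reflTransGen_thb {e f : Fin n} (h : pathTxn C txn e f) :
    ReflTransGen (thb C txn) (txn e) (txn f) := by
  obtain ⟨k, hk, es, fs, hes, hfs, hsame, hstep⟩ := h
  have hreach : ∀ i < k, ReflTransGen (thb C txn) (txn e) (txn (es i)) := by
    intro i
    induction i with
    | zero => exact fun _ => hes ▸ .refl
    | succ i ih =>
      intro hi
      refine (ih (by omega)).tail ?_
      rw [hsame i (by omega)]
      exact thb_of_chb (hstep i hi).2
  rw [← hfs, ← hsame (k - 1) (by omega)]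
  exact hreach (k - 1) (by omega)

lemma newEdge.transGen_thb {completed : Tx → Prop} {e f : Fin n}
    (h : newEdge C txn completed e f) : TransGen (thb C txn) (txn e) (txn f) := by
  obtain ⟨g, heg, rfl | ⟨hgf, -⟩⟩ := h
  · exact .single (thb_of_chb heg)
  · exact .head' (thb_of_chb heg) hgf.reflTransGen_thb

end Transactions

/-- Soundness: if there are a transaction `T` (with begin event `Tbegin`)
and events `f ∈ T`, `e ∉ T` with `Tbegin ⤳ e` and `e ⤳ f`, then the trace
is not conflict serializable. -/
theorem newEdge_implies_violation {n : ℕ} {Tx : Type*}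
    (C : Fin n → Fin n → Prop) (txn : Fin n → Tx) (completed : Tx → Prop)
    (T : Tx) (Tbegin e f : Fin n)
    (hTb : txn Tbegin = T) (hf : txn f = T) (he : txn e ≠ T)
    (h1 : newEdge C txn completed Tbegin e)
    (h2 : newEdge C txn completed e f) :
    hasCycle C txn := by
  have hTe : TransGen (thb C txn) T (txn e) := hTb ▸ h1.transGen_thb
  have heT : TransGen (thb C txn) (txn e) T := hf ▸ h2.transGen_thb
  exact exists_cycle_of_transGen he.symm hTe heT
end

section
/- Let σ be a trace that is not conflict serializable, witnessed by distinct transactions T0, ..., T_{k-1} (k > 1) with T_i ≤THB T_{(i+1) mod k}, such that all of the Ti except possibly one are completed in σ. Then there exist a transaction T and events e, f in σ with f ∈ T, e ∉ T, T▷ ⤳ e, and e ⤳ f, where T▷ is the begin event of T. -/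
/-!
Let `T_j` be the transaction of the cycle that may be uncompleted, and let `e ∈ T_{j-1}`,
`f ∈ T_j` witness `T_{j-1} ≤THB T_j`, so that `e ⤳ f` directly. From `T_j▷` one reaches by
`≤CHB` the event of the completed transaction `T_{j+1}` witnessing `T_j ≤THB T_{j+1}`, and from
there a path through transactions runs around the cycle back to `e`. The cycle is handled as
the periodic walk `i ↦ T_{i mod k}` indexed by all of `ℕ`.
-/

lemma Nat.add_one_mod_ne_self {k : ℕ} (hk : 1 < k) (j : ℕ) : (j + 1) % k ≠ j := by
  rcases lt_trichotomy (j + 1) k with hlt | heq | hgt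
  · rw [Nat.mod_eq_of_lt hlt]; omega
  · rw [heq, Nat.mod_self]; omega
  · have := Nat.mod_lt (j + 1) (by omega : 0 < k); omega

lemma Nat.add_one_mod_ne_mod {k : ℕ} (hk : 1 < k) (i : ℕ) : (i + 1) % k ≠ i % k := by
  rw [← Nat.mod_add_mod]
  exact Nat.add_one_mod_ne_self hk _

structure IsTxnWalk {n : ℕ} {Tx : Type*} (C : Fin n → Fin n → Prop) (txn : Fin n → Tx)
    (U : ℕ → Tx) (src dst : ℕ → Fin n) : Prop where
  txn_src : ∀ i, txn (src i) = U i
  txn_dst : ∀ i, txn (dst i) = U (i + 1)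
  ne_succ : ∀ i, U i ≠ U (i + 1)
  chb_src_dst : ∀ i, chb C (src i) (dst i)

namespace IsTxnWalk

variable {n : ℕ} {Tx : Type*} {C : Fin n → Fin n → Prop} {txn : Fin n → Tx}
  {U : ℕ → Tx} {src dst : ℕ → Fin n}

theorem pathTxn_dst_src (hw : IsTxnWalk C txn U src dst) (s : ℕ) {m : ℕ} (hm : 1 < m) :
    pathTxn C txn (dst s) (src (s + m)) := by
  refine ⟨m, hm, fun i => dst (s + i), fun i => src (s + i + 1), rfl, ?_, ?_, ?_⟩
  · simp only [Nat.add_assoc, Nat.sub_add_cancel (by omega : 1 ≤ m)]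
  · intro i _
    rw [hw.txn_dst, hw.txn_src]
  · intro i _
    rw [hw.txn_src, hw.txn_dst, ← Nat.add_assoc]
    exact ⟨hw.ne_succ _, hw.chb_src_dst _⟩

theorem newEdge_beginEv (hw : IsTxnWalk C txn U src dst) {completed : Tx → Prop}
    {beginEv : Tx → Fin n} (hbeginChb : ∀ e, chb C (beginEv (txn e)) e) {t q : ℕ}
    (htq : t + 1 < q) (hcomp : completed (U (t + 1))) :
    newEdge C txn completed (beginEv (U t)) (src q) := by
  have hbegin : chb C (beginEv (U t)) (src t) := hw.txn_src t ▸ hbeginChb (src t)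
  have hpath : pathTxn C txn (dst t) (src q) := by
    simpa [Nat.add_sub_cancel' (by omega : t ≤ q)] using hw.pathTxn_dst_src t (m := q - t) (by omega)
  exact ⟨dst t, hbegin.trans (hw.chb_src_dst t), Or.inr ⟨hpath, hw.txn_dst t ▸ hcomp⟩⟩

end IsTxnWalk

theorem exists_isTxnWalk_of_cycle {n : ℕ} {Tx : Type*} {C : Fin n → Fin n → Prop}
    {txn : Fin n → Tx} {k : ℕ} (hk : 1 < k) {Ts : ℕ → Tx}
    (hdist : ∀ i < k, ∀ j < k, Ts i = Ts j → i = j)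
    (hcyc : ∀ i < k, thb C txn (Ts i) (Ts ((i + 1) % k))) :
    ∃ src dst, IsTxnWalk C txn (fun i => Ts (i % k)) src dst := by
  have hedge : ∀ i, ∃ a b, txn a = Ts (i % k) ∧ txn b = Ts ((i + 1) % k) ∧ chb C a b := by
    intro i
    obtain ⟨a, b, ha, hb, hab⟩ := hcyc (i % k) (Nat.mod_lt _ (by omega))
    exact ⟨a, b, ha, by rw [hb, Nat.mod_add_mod], hab⟩
  choose src dst hsrc hdst hchb using hedge
  refine ⟨src, dst, hsrc, hdst, fun i hEq => ?_, hchb⟩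
  exact Nat.add_one_mod_ne_mod hk i
    (hdist _ (Nat.mod_lt _ (by omega)) _ (Nat.mod_lt _ (by omega)) hEq).symm

theorem violation_implies_newEdge_general {n : ℕ} {Tx : Type*}
    (C : Fin n → Fin n → Prop) (txn : Fin n → Tx) (completed : Tx → Prop)
    (beginEv : Tx → Fin n)
    (hbeginChb : ∀ e, chb C (beginEv (txn e)) e)
    (k : ℕ) (hk : 1 < k) (Ts : ℕ → Tx)
    (hdist : ∀ i < k, ∀ j < k, Ts i = Ts j → i = j)
    (hcyc : ∀ i < k, thb C txn (Ts i) (Ts ((i + 1) % k)))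
    (hcomp : ∃ j, ∀ i < k, i ≠ j → completed (Ts i)) :
    ∃ (T : Tx) (e f : Fin n), txn f = T ∧ txn e ≠ T ∧
      newEdge C txn completed (beginEv T) e ∧ newEdge C txn completed e f := by
  obtain ⟨j, hj⟩ := hcomp
  obtain ⟨src, dst, hw⟩ := exists_isTxnWalk_of_cycle (C := C) (txn := txn) hk hdist hcyc
  have hnext : completed (Ts ((j + 1) % k)) :=
    hj _ (Nat.mod_lt _ (by omega)) (Nat.add_one_mod_ne_self hk j)
  -- Winding almost twice around the cycle makes the path from `dst j` to `src q` pass through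
  -- at least two transactions, even when `k = 2`.
  set q := j + 2 * k - 1
  have hq : (q + 1) % k = j % k := by
    rw [show q + 1 = j + 2 * k by omega, Nat.add_mul_mod_self_right]
  refine ⟨Ts (j % k), src q, dst q, ?_, ?_, ?_, ⟨dst q, hw.chb_src_dst q, Or.inl rfl⟩⟩
  · rw [hw.txn_dst, hq]
  · rw [hw.txn_src, ← hq]
    exact hw.ne_succ q
  · exact hw.newEdge_beginEv hbeginChb (by omega) hnext

/-- Completeness: if the trace has a `thb`-cycle of `k > 1` distinct
transactions, all completed except possibly one, then there are a transaction
`T` and events `f ∈ T`, `e ∉ T` with `T▷ ⤳ e` and `e ⤳ f`. -/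
theorem violation_implies_newEdge {n : ℕ} {Tx : Type*}
    (C : Fin n → Fin n → Prop) (txn : Fin n → Tx) (completed : Tx → Prop)
    (beginEv : Tx → Fin n)
    (hbeginTxn : ∀ T, txn (beginEv T) = T)
    (hbeginChb : ∀ e, chb C (beginEv (txn e)) e)
    (k : ℕ) (hk : 1 < k) (Ts : ℕ → Tx)
    (hdist : ∀ i < k, ∀ j < k, Ts i = Ts j → i = j)
    (hcyc : ∀ i < k, thb C txn (Ts i) (Ts ((i + 1) % k)))
    (hcomp : ∃ j, ∀ i < k, i ≠ j → completed (Ts i)) :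
    ∃ (T : Tx) (e f : Fin n), txn f = T ∧ txn e ≠ T ∧
      newEdge C txn completed (beginEv T) e ∧ newEdge C txn completed e f :=
  violation_implies_newEdge_general C txn completed beginEv hbeginChb k hk Ts hdist hcyc hcomp
end

section
/- If a trace σ has a ≤THB-cycle of length k > 1 involving a transaction T that is nested inside another transaction T' (every event of T is an event of T'), then σ also has a ≤THB-cycle involving T' in place of T; hence detecting conflict-serializability violations is unaffected by replacing nested transactions with their outermost enclosing transactions. -/
/-!
If `T'` already lies on the cycle, the cycle itself will do. Otherwise overwrite `T` by `T'`:
every `≤THB` edge survives because `T'` has all the events of `T`, and the transactions stay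
distinct because `T'` was not on the cycle.
-/

/-- CHB, with events given by membership (transactions may be nested). -/
def chbM {n : ℕ} (C : Fin n → Fin n → Prop) : Fin n → Fin n → Prop :=
  Relation.ReflTransGen (fun e f => e < f ∧ C e f)

/-- Transaction happens-before, with event membership in transactions given
by a relation (so transactions may be nested). -/
def thbM {n : ℕ} {Tx : Type*} (C : Fin n → Fin n → Prop)
    (mem : Fin n → Tx → Prop) (T T' : Tx) : Prop :=
  ∃ e f, mem e T ∧ mem f T' ∧ chbM C e f

open Function

theorem Set.InjOn.update_of_notMem_image {α β : Type*} [DecidableEq α] {f : α → β}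
    {s : Set α} (hf : s.InjOn f) (a : α) {b : β} (hb : b ∉ f '' s) :
    s.InjOn (update f a b) := by
  intro i hi j hj hij
  rcases eq_or_ne i a with rfl | hia <;> rcases eq_or_ne j i with rfl | hji
  · rfl
  · rw [update_self, update_of_ne hji] at hij
    exact absurd ⟨j, hj, hij.symm⟩ hb
  · rfl
  · rcases eq_or_ne j a with rfl | hja
    · rw [update_self, update_of_ne hia] at hij
      exact absurd ⟨i, hi, hij⟩ hb
    · rwa [update_of_ne hia, update_of_ne hja, hf.eq_iff hi hj] at hij

theorem thbM_mono {n : ℕ} {Tx : Type*} {C : Fin n → Fin n → Prop} {mem : Fin n → Tx → Prop}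
    {T₁ T₂ U₁ U₂ : Tx} (hT : ∀ e, mem e T₁ → mem e T₂) (hU : ∀ e, mem e U₁ → mem e U₂)
    (h : thbM C mem T₁ U₁) : thbM C mem T₂ U₂ := by
  obtain ⟨e, f, he, hf, hef⟩ := h
  exact ⟨e, f, hT e he, hU f hf, hef⟩

theorem mem_update_of_nested {ι Ev Tx : Type*} [DecidableEq ι] {mem : Ev → Tx → Prop}
    {Ts : ι → Tx} {i : ι} {T' : Tx} (hnested : ∀ e, mem e (Ts i) → mem e T') (j : ι) (e : Ev)
    (he : mem e (Ts j)) : mem e (update Ts i T' j) := by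
  rcases eq_or_ne j i with rfl | hji
  · simpa using hnested e he
  · rwa [update_of_ne hji]

/-- If a THB-cycle of k > 1 distinct transactions goes through a transaction
Ts 0 nested inside T' (every event of Ts 0 is an event of T'), then there is
also a THB-cycle of more than one distinct transactions containing T'. -/
theorem nested_cycle_outer {n : ℕ} {Tx : Type*}
    (C : Fin n → Fin n → Prop) (mem : Fin n → Tx → Prop)
    (k : ℕ) (hk : 1 < k) (Ts : ℕ → Tx)
    (hdist : ∀ i < k, ∀ j < k, Ts i = Ts j → i = j)
    (hcyc : ∀ i < k, thbM C mem (Ts i) (Ts ((i + 1) % k)))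
    (T' : Tx) (hnested : ∀ e, mem e (Ts 0) → mem e T') :
    ∃ k', 1 < k' ∧ ∃ Ts' : ℕ → Tx,
      (∀ i < k', ∀ j < k', Ts' i = Ts' j → i = j) ∧
      (∀ i < k', thbM C mem (Ts' i) (Ts' ((i + 1) % k'))) ∧
      (∃ i < k', Ts' i = T') := by
  by_cases hT' : ∃ j < k, Ts j = T'
  · exact ⟨k, hk, Ts, hdist, hcyc, hT'⟩
  have hT'_off : T' ∉ Ts '' Set.Iio k := fun ⟨j, hj, hjT'⟩ => hT' ⟨j, hj, hjT'⟩
  have hinj : (Set.Iio k).InjOn (update Ts 0 T') :=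
    Set.InjOn.update_of_notMem_image (fun i hi j hj => hdist i hi j hj) 0 hT'_off
  refine ⟨k, hk, update Ts 0 T', fun i hi j hj => hinj hi hj, fun i hi => ?_,
    0, by omega, update_self ..⟩
  exact thbM_mono (mem_update_of_nested hnested i) (mem_update_of_nested hnested _) (hcyc i hi)
end

section
/- In trace ρ3 = begin(t1), begin(t2), w(t1,x), w(t2,y), r(t1,y), r(t2,x), end(t1), end(t2), there is no pair of events e ≠ f in the same transaction such that e ≤CHB g ≤CHB f for some event g of the other transaction (i.e., no ≤CHB-path leaves a transaction and comes back to it), yet the trace is not conflict serializable since T1 ≤THB T2 and T2 ≤THB T1. -/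
/-- Trace rho3 = begin(t1), begin(t2), w(t1,x), w(t2,y), r(t1,y), r(t2,x),
end(t1), end(t2): threads of the 8 events (0-indexed). -/
def thr3 : Fin 8 → Fin 2 := ![0, 1, 0, 1, 0, 1, 0, 1]

/-- Conflicts of rho3: same-thread pairs, plus w(t1,x)/r(t2,x) (events 2,5)
and w(t2,y)/r(t1,y) (events 3,4). -/
def C3 : Fin 8 → Fin 8 → Prop := fun e f =>
  thr3 e = thr3 f ∨ (e = 2 ∧ f = 5) ∨ (e = 5 ∧ f = 2) ∨
    (e = 3 ∧ f = 4) ∨ (e = 4 ∧ f = 3)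

/-!
Every cross-transaction conflict of ρ3 (`w(t1,x)`–`r(t2,x)` and `w(t2,y)`–`r(t1,y)`) leads
from one of the first four events to one of the last four. A ≤CHB-path only moves forward in
the trace, so it can change transaction at most once and never returns to the transaction it
left. Yet these two conflicts point in opposite directions, giving T1 ≤THB T2 ≤THB T1.
-/

theorem Relation.ReflTransGen.exists_step_of_apply_ne {α β : Type*} {r : α → α → Prop}
    {f : α → β} {a b : α} (h : ReflTransGen r a b) (hab : f a ≠ f b) :
    ∃ c d, ReflTransGen r a c ∧ r c d ∧ ReflTransGen r d b ∧ f c ≠ f d := by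
  induction h with
  | refl => exact absurd rfl hab
  | @tail c d hac hcd ih =>
    by_cases hc : f a = f c
    · exact ⟨c, d, hac, hcd, .refl, hc ▸ hab⟩
    · obtain ⟨x, y, hax, hxy, hyc, hne⟩ := ih hc
      exact ⟨x, y, hax, hxy, hyc.tail hcd, hne⟩

theorem chb.le {n : ℕ} {C : Fin n → Fin n → Prop} {e f : Fin n} (h : chb C e f) : e ≤ f := by
  induction h with
  | refl => exact le_rfl
  | tail _ hstep ih => exact ih.trans hstep.1.le

theorem hasCycle_of_thb_of_thb {n : ℕ} {Tx : Type*} {C : Fin n → Fin n → Prop}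
    {txn : Fin n → Tx} {T T' : Tx} (hne : T ≠ T') (h : thb C txn T T') (h' : thb C txn T' T) :
    hasCycle C txn := by
  refine ⟨2, one_lt_two, fun i => if i = 0 then T else T', ?_, ?_⟩
  · intro i hi j hj hij
    interval_cases i <;> interval_cases j <;> simp_all [eq_comm]
  · intro i hi
    interval_cases i <;> simpa

theorem C3_cross_step_bounds {a b : Fin 8} (hab : a < b ∧ C3 a b) (hne : thr3 a ≠ thr3 b) :
    a ≤ 3 ∧ 4 ≤ b := by
  revert a b
  unfold C3 thr3
  decide

/-- In rho3 there is no CHB-path that leaves a transaction and returns to it,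
yet the trace is not conflict serializable: T1 THB T2 and T2 THB T1. -/
theorem rho3_no_chb_path_yet_violation :
    (¬ ∃ e f g : Fin 8, e ≠ f ∧ thr3 e = thr3 f ∧ thr3 g ≠ thr3 e ∧
        chb C3 e g ∧ chb C3 g f) ∧
    thb C3 thr3 0 1 ∧ thb C3 thr3 1 0 ∧
    hasCycle C3 thr3 := by
  have h01 : thb C3 thr3 0 1 :=
    ⟨2, 5, rfl, rfl, .single ⟨by decide, Or.inr (Or.inl ⟨rfl, rfl⟩)⟩⟩
  have h10 : thb C3 thr3 1 0 :=
    ⟨3, 4, rfl, rfl, .single ⟨by decide, Or.inr (Or.inr (Or.inr (Or.inl ⟨rfl, rfl⟩)))⟩⟩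
  refine ⟨?_, h01, h10, hasCycle_of_thb_of_thb zero_ne_one h01 h10⟩
  rintro ⟨e, f, g, -, hef, hge, heg, hgf⟩
  obtain ⟨a, b, -, hab, hbg, hne⟩ := heg.exists_step_of_apply_ne (f := thr3) (Ne.symm hge)
  obtain ⟨c, d, hgc, hcd, -, hne'⟩ := hgf.exists_step_of_apply_ne (f := thr3) (hef ▸ hge)
  have h4b : 4 ≤ b := (C3_cross_step_bounds hab hne).2
  have hc3 : c ≤ 3 := (C3_cross_step_bounds hcd hne').1
  exact absurd (h4b.trans ((chb.le hbg).trans ((chb.le hgc).trans hc3))) (by decide)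
end

section
/- If σ is a complete trace (every begun transaction has its matching end event in σ) that is not conflict serializable, then there exist a transaction T and events e, f in σ with f ∈ T, e ∉ T, txn(e) completed in σ, T▷ ⤳ e and e ⤳ f (where T▷ is the begin event of T); conversely if such T, e, f exist in any prefix of σ then σ is not conflict serializable. -/
/-!
A cycle `T₀ → T₁ → ⋯ → T_{k-1} → T₀` of transaction happens-before edges `aᵢ ≤CHB bᵢ`
(`aᵢ ∈ Tᵢ`, `bᵢ ∈ Tᵢ₊₁`) is already a witness: take `T = T₀`, `e = a_{k-1}`, `f = b_{k-1}`.
Then `e ⤳ f` by a single conflict edge, and `T₀▷ ⤳ e` because `T₀▷ ≤CHB a₀` and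
`a₀, b₀ a₁, …, b_{k-2} a_{k-1}` is a path through the transactions `T₀, …, T_{k-1}`;
completeness of the trace supplies the completion side conditions.

Conversely, every `⤳` step projects to a chain of happens-before edges between transactions,
so a witness yields a closed walk `T → txn e → T` of length at least one; a shortest closed
walk visits pairwise distinct transactions and is a conflict serializability violation.
-/

/-- Conflict-happens-before of the length-m prefix of a trace whose events are
natural numbers in trace order: reflexive-transitive closure of conflict edges
oriented by trace order, restricted to events of the prefix. -/
def chbIn (C : ℕ → ℕ → Prop) (m : ℕ) : ℕ → ℕ → Prop :=
  Relation.ReflTransGen (fun e f => e < f ∧ f < m ∧ C e f)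

/-- Path through transactions in the length-m prefix. -/
def pathIn {Tx : Type*} (C : ℕ → ℕ → Prop) (txn : ℕ → Tx) (m : ℕ)
    (e f : ℕ) : Prop :=
  ∃ k, 1 < k ∧ ∃ es fs : ℕ → ℕ,
    es 0 = e ∧ fs (k - 1) = f ∧
    (∀ i < k, es i < m ∧ fs i < m) ∧
    (∀ i < k, txn (es i) = txn (fs i)) ∧
    (∀ i, i + 1 < k → txn (fs i) ≠ txn (es (i + 1)) ∧ chbIn C m (fs i) (es (i + 1)))

/-- New-edge relation in the length-m prefix; a transaction is completed in the
prefix iff its end event occurs in it. -/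
def newEdgeIn {Tx : Type*} (C : ℕ → ℕ → Prop) (txn : ℕ → Tx) (endEv : Tx → ℕ)
    (m : ℕ) (e f : ℕ) : Prop :=
  ∃ g, chbIn C m e g ∧ (g = f ∨ (pathIn C txn m g f ∧ endEv (txn g) < m))

/-- Transaction happens-before in the length-m prefix. -/
def thbIn {Tx : Type*} (C : ℕ → ℕ → Prop) (txn : ℕ → Tx) (m : ℕ)
    (T T' : Tx) : Prop :=
  ∃ e f, e < m ∧ f < m ∧ txn e = T ∧ txn f = T' ∧ chbIn C m e f

/-- Conflict-serializability violation in the length-m prefix. -/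
def hasCycleIn {Tx : Type*} (C : ℕ → ℕ → Prop) (txn : ℕ → Tx) (m : ℕ) : Prop :=
  ∃ k, 1 < k ∧ ∃ Ts : ℕ → Tx,
    (∀ i < k, ∀ j < k, Ts i = Ts j → i = j) ∧
    (∀ i < k, thbIn C txn m (Ts i) (Ts ((i + 1) % k)))

open Relation

def thbNe {Tx : Type*} (C : ℕ → ℕ → Prop) (txn : ℕ → Tx) (N : ℕ) (T T' : Tx) : Prop :=
  T ≠ T' ∧ thbIn C txn N T T'

/-- The paper's witness `T▷ ⤳ e ⤳ f` in the length-`m` prefix. -/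
def HasWitnessIn {Tx : Type*} (C : ℕ → ℕ → Prop) (txn : ℕ → Tx) (beginEv endEv : Tx → ℕ)
    (m : ℕ) : Prop :=
  ∃ (T : Tx) (e f : ℕ), e < m ∧ f < m ∧ txn f = T ∧ txn e ≠ T ∧
    endEv (txn e) < m ∧
    newEdgeIn C txn endEv m (beginEv T) e ∧
    newEdgeIn C txn endEv m e f

section Cycles

variable {α : Type*} {R : α → α → Prop}

lemma Relation.TransGen.exists_walk {a b : α} (h : TransGen R a b) :
    ∃ n, 0 < n ∧ ∃ U : ℕ → α, U 0 = a ∧ U n = b ∧ ∀ i < n, R (U i) (U (i + 1)) := by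
  induction h with
  | single hab => exact ⟨1, one_pos, fun i => if i = 0 then a else _, rfl, rfl, by simpa⟩
  | @tail c d _ hcd ih =>
    obtain ⟨n, hn, U, hU0, hUn, hU⟩ := ih
    refine ⟨n + 1, n.succ_pos, fun i => if i ≤ n then U i else d, by simpa, by simp, ?_⟩
    intro i hi
    rcases Nat.lt_or_ge i n with hin | hin
    · simpa [hin.le, Nat.succ_le_of_lt hin] using hU i hin
    · obtain rfl : i = n := by omega
      simpa [hUn] using hcd

lemma exists_injective_cycle_of_transGen (hR : ∀ a, ¬ R a a) {a : α} (h : TransGen R a a) :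
    ∃ k, 1 < k ∧ ∃ V : ℕ → α,
      (∀ i < k, ∀ j < k, V i = V j → i = j) ∧ ∀ i < k, R (V i) (V ((i + 1) % k)) := by
  classical
  let IsClosedWalkLength n := 0 < n ∧ ∃ U : ℕ → α, U 0 = U n ∧ ∀ i < n, R (U i) (U (i + 1))
  have hex : ∃ n, IsClosedWalkLength n := by
    obtain ⟨n, hn, U, hU0, hUn, hU⟩ := h.exists_walk
    exact ⟨n, hn, U, hU0.trans hUn.symm, hU⟩
  obtain ⟨k, ⟨hk0, V, hVk, hV⟩, hmin⟩ :
      ∃ k, IsClosedWalkLength k ∧ ∀ n < k, ¬ IsClosedWalkLength n :=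
    ⟨_, Nat.find_spec hex, fun _ => Nat.find_min hex⟩
  -- a repeated vertex `V i = V j` would cut out a closed walk of length `j - i < k`
  have hne : ∀ i j, i < j → j < k → V i ≠ V j := fun i j hij hjk hVij =>
    hmin (j - i) (by omega) ⟨by omega, fun t => V (i + t),
      by simpa [Nat.add_sub_cancel' hij.le] using hVij,
      fun t ht => by simpa [Nat.add_assoc] using hV (i + t) (by omega)⟩
  have hk1 : 1 < k := by
    by_contra hk
    obtain rfl : k = 1 := by omega
    exact hR (V 0) (hVk ▸ hV 0 hk0)
  refine ⟨k, hk1, V, fun i hi j hj hij => ?_, fun i hi => ?_⟩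
  · by_contra hij'
    rcases Nat.lt_or_gt_of_ne hij' with hlt | hlt
    exacts [hne i j hlt hj hij, hne j i hlt hi hij.symm]
  · rcases Nat.lt_or_ge (i + 1) k with hlt | hge
    · simpa [Nat.mod_eq_of_lt hlt] using hV i hi
    · obtain rfl : i + 1 = k := by omega
      simpa [← hVk] using hV i hi

end Cycles

section Trace

variable {Tx : Type*} {C : ℕ → ℕ → Prop} {txn : ℕ → Tx} {m N : ℕ}

lemma pathIn_of_chain {k : ℕ} (hk : 1 < k) {A B : ℕ → ℕ}
    (hA : ∀ i < k, A i < m) (hB : ∀ i, i + 1 < k → B i < m)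
    (hBtxn : ∀ i, i + 1 < k → txn (B i) = txn (A (i + 1)))
    (hne : ∀ i, i + 1 < k → txn (A i) ≠ txn (A (i + 1)))
    (hchb : ∀ i, i + 1 < k → chbIn C m (A i) (B i)) :
    pathIn C txn m (A 0) (A (k - 1)) := by
  refine ⟨k, hk, fun i => if i = 0 then A 0 else B (i - 1), A, rfl, rfl, ?_, ?_, ?_⟩
  · intro i hi
    dsimp only
    split_ifs with hi0
    · exact ⟨hA 0 (by omega), hA i hi⟩
    · exact ⟨hB (i - 1) (by omega), hA i hi⟩
  · intro i hi
    dsimp only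
    split_ifs with hi0
    · rw [hi0]
    · rw [hBtxn (i - 1) (by omega), Nat.sub_add_cancel (by omega)]
  · intro i hi
    simpa [hBtxn i hi] using ⟨hne i hi, hchb i hi⟩

lemma hasWitnessIn_of_hasCycleIn {beginEv endEv : Tx → ℕ}
    (hbeginChb : ∀ e < N, chbIn C N (beginEv (txn e)) e)
    (hcomplete : ∀ e < N, endEv (txn e) < N) (h : hasCycleIn C txn N) :
    HasWitnessIn C txn beginEv endEv N := by
  obtain ⟨k, hk, Ts, hinj, hcyc⟩ := h
  choose! A B hA hB hAtxn hBtxn hchb using hcyc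
  have hlast : (k - 1 + 1) % k = 0 := by rw [Nat.sub_add_cancel (by omega), Nat.mod_self]
  have hsucc : ∀ i, i + 1 < k → txn (B i) = txn (A (i + 1)) := fun i hi => by
    rw [hBtxn i (by omega), Nat.mod_eq_of_lt hi, hAtxn (i + 1) hi]
  have hne : ∀ i, i + 1 < k → txn (A i) ≠ txn (A (i + 1)) := fun i hi hAA => by
    rw [hAtxn i (by omega), hAtxn (i + 1) hi] at hAA
    exact absurd (hinj i (by omega) (i + 1) hi hAA) (by omega)
  have hpath : pathIn C txn N (A 0) (A (k - 1)) :=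
    pathIn_of_chain hk hA (fun i hi => hB i (by omega)) hsucc hne (fun i hi => hchb i (by omega))
  refine ⟨txn (A 0), A (k - 1), B (k - 1), hA _ (by omega), hB _ (by omega), ?_, ?_,
    hcomplete _ (hA _ (by omega)), ⟨A 0, hbeginChb _ (hA 0 (by omega)),
      Or.inr ⟨hpath, hcomplete _ (hA 0 (by omega))⟩⟩, ⟨B (k - 1), hchb _ (by omega), Or.inl rfl⟩⟩
  · rw [hBtxn _ (by omega), hlast, hAtxn 0 (by omega)]
  · rw [hAtxn _ (by omega), hAtxn 0 (by omega)]
    exact fun h0 => absurd (hinj _ (by omega) 0 (by omega) h0) (by omega)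

lemma reflTransGen_thbNe_of_chbIn (hmN : m ≤ N) {a b : ℕ} (h : chbIn C m a b) :
    ReflTransGen (thbNe C txn N) (txn a) (txn b) := by
  induction h with
  | refl => exact .refl
  | @tail c d _ hcd ih =>
    by_cases hcd' : txn c = txn d
    · rwa [← hcd']
    · have hdN : d < N := lt_of_lt_of_le hcd.2.1 hmN
      exact ih.tail ⟨hcd', c, d, hcd.1.trans hdN, hdN, rfl, rfl,
        .single ⟨hcd.1, hdN, hcd.2.2⟩⟩

lemma reflTransGen_thbNe_of_pathIn (hmN : m ≤ N) {g f : ℕ} (h : pathIn C txn m g f) :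
    ReflTransGen (thbNe C txn N) (txn g) (txn f) := by
  obtain ⟨k, hk, es, fs, rfl, rfl, -, htxn, hstep⟩ := h
  suffices ∀ i < k, ReflTransGen (thbNe C txn N) (txn (es 0)) (txn (fs i)) from this _ (by omega)
  intro i hi
  induction i with
  | zero => rw [htxn 0 hi]
  | succ j ih =>
    rw [← htxn _ hi]
    exact (ih (by omega)).trans (reflTransGen_thbNe_of_chbIn hmN (hstep j hi).2)

lemma reflTransGen_thbNe_of_newEdgeIn {endEv : Tx → ℕ} (hmN : m ≤ N) {a b : ℕ}
    (h : newEdgeIn C txn endEv m a b) : ReflTransGen (thbNe C txn N) (txn a) (txn b) := by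
  obtain ⟨g, hag, rfl | ⟨hgb, -⟩⟩ := h
  · exact reflTransGen_thbNe_of_chbIn hmN hag
  · exact (reflTransGen_thbNe_of_chbIn hmN hag).trans (reflTransGen_thbNe_of_pathIn hmN hgb)

lemma hasCycleIn_of_transGen_thbNe {T : Tx} (h : TransGen (thbNe C txn N) T T) :
    hasCycleIn C txn N := by
  obtain ⟨k, hk, Ts, hinj, hstep⟩ := exists_injective_cycle_of_transGen (fun _ h => h.1 rfl) h
  exact ⟨k, hk, Ts, hinj, fun i hi => (hstep i hi).2⟩

lemma hasCycleIn_of_hasWitnessIn {beginEv endEv : Tx → ℕ} (hbeginTxn : ∀ T, txn (beginEv T) = T)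
    (hmN : m ≤ N) (h : HasWitnessIn C txn beginEv endEv m) : hasCycleIn C txn N := by
  obtain ⟨T, e, f, -, -, rfl, he, -, hbe, hef⟩ := h
  have hTe := reflTransGen_thbNe_of_newEdgeIn hmN hbe
  rw [hbeginTxn] at hTe
  obtain hTe | hTe := reflTransGen_iff_eq_or_transGen.mp hTe
  · exact absurd hTe he
  · exact hasCycleIn_of_transGen_thbNe (hTe.trans_left (reflTransGen_thbNe_of_newEdgeIn hmN hef))

end Trace

/-- For a complete trace (of length N, with every begun transaction completed):
if it is not conflict serializable then there are T, e, f with f in T, e not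
in T, txn e completed, T-begin newEdge e and e newEdge f; conversely, if such
T, e, f exist in any prefix, the trace is not conflict serializable. -/
theorem complete_trace_characterization {Tx : Type*}
    (C : ℕ → ℕ → Prop) (txn : ℕ → Tx) (beginEv endEv : Tx → ℕ) (N : ℕ)
    (hbeginTxn : ∀ T, txn (beginEv T) = T)
    (hbeginChb : ∀ e < N, chbIn C N (beginEv (txn e)) e)
    (hcomplete : ∀ e < N, endEv (txn e) < N) :
    (hasCycleIn C txn N →
      ∃ (T : Tx) (e f : ℕ), e < N ∧ f < N ∧ txn f = T ∧ txn e ≠ T ∧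
        endEv (txn e) < N ∧
        newEdgeIn C txn endEv N (beginEv T) e ∧
        newEdgeIn C txn endEv N e f) ∧
    (∀ m ≤ N,
      (∃ (T : Tx) (e f : ℕ), e < m ∧ f < m ∧ txn f = T ∧ txn e ≠ T ∧
        endEv (txn e) < m ∧
        newEdgeIn C txn endEv m (beginEv T) e ∧
        newEdgeIn C txn endEv m e f) →
      hasCycleIn C txn N) :=
  ⟨hasWitnessIn_of_hasCycleIn hbeginChb hcomplete,
    fun _ hmN => hasCycleIn_of_hasWitnessIn hbeginTxn hmN⟩
end
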